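/- Let (a_k)_{k≥0} be nonnegative reals and suppose for all k ≥ 0, a_k ≤ C(S_k - S_{k+τ}) where (S_k) is nonincreasing, bounded below by s, and C, τ > 0. Then for any K > τ, min_{k ≤ K} a_k ≤ C(τ+1)(S_0 - s)/K. -/

import Mathlib

/-!
Summing the hypothesis over `k ≤ K`, the lag-`τ` differences telescope to
`∑_{j<τ} (S j - S (K + 1 + j)) ≤ τ (S 0 - s)`, so the smallest of the `K + 1` terms `a k` is at most
`C τ (S 0 - s) / (K + 1) ≤ C (τ + 1) (S 0 - s) / K`.
-/

open Finset

theorem Finset.sum_range_sub_shift {M : Type*} [AddCommGroup M] (f : ℕ → M) (n τ : ℕ) :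
    ∑ i ∈ range n, (f i - f (i + τ)) = ∑ j ∈ range τ, (f j - f (n + j)) := by
  have hsplit := sum_range_add f n τ
  rw [add_comm n τ, sum_range_add f τ n] at hsplit
  simp only [sum_sub_distrib, add_comm _ τ]
  exact sub_eq_sub_iff_add_eq_add.2 hsplit.symm

theorem Antitone.sum_range_sub_shift_le {M : Type*} [AddCommGroup M] [PartialOrder M]
    [IsOrderedAddMonoid M] {S : ℕ → M} (hS : Antitone S) {s : M} (hs : ∀ k, s ≤ S k) (n τ : ℕ) :
    ∑ i ∈ range n, (S i - S (i + τ)) ≤ τ • (S 0 - s) := by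
  rw [sum_range_sub_shift]
  calc ∑ j ∈ range τ, (S j - S (n + j))
      ≤ ∑ _j ∈ range τ, (S 0 - s) := sum_le_sum fun j _ => sub_le_sub (hS j.zero_le) (hs _)
    _ = τ • (S 0 - s) := by rw [sum_const, card_range]

theorem sublinear_rate_general (a S : ℕ → ℝ) (C s : ℝ) (τ : ℕ)
    (hC : 0 < C)
    (hS_mono : ∀ k, S (k + 1) ≤ S k)
    (hS_bdd : ∀ k, s ≤ S k)
    (hbound : ∀ k, a k ≤ C * (S k - S (k + τ))) :
    ∀ K : ℕ, τ < K →
      ∃ k ≤ K, a k ≤ C * (τ + 1) * (S 0 - s) / K := by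
  intro K hK
  have hK₀ : (0 : ℝ) < K := by exact_mod_cast τ.zero_le.trans_lt hK
  have hgap : 0 ≤ S 0 - s := sub_nonneg.2 (hS_bdd 0)
  have hsum : ∑ i ∈ range (K + 1), a i ≤ ∑ _i ∈ range (K + 1), C * τ * (S 0 - s) / (K + 1) := by
    calc ∑ i ∈ range (K + 1), a i
        ≤ C * ∑ i ∈ range (K + 1), (S i - S (i + τ)) := by
          rw [mul_sum]; exact sum_le_sum fun i _ => hbound i
      _ ≤ C * (τ * (S 0 - s)) := by
          gcongr
          simpa only [nsmul_eq_mul] using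
            (antitone_nat_of_succ_le hS_mono).sum_range_sub_shift_le hS_bdd (K + 1) τ
      _ = _ := by rw [sum_const, card_range, nsmul_eq_mul]; push_cast; field_simp
  obtain ⟨k, hk, hak⟩ := exists_le_of_sum_le nonempty_range_add_one hsum
  refine ⟨k, Nat.lt_succ_iff.mp (mem_range.mp hk), hak.trans ?_⟩
  rw [div_le_div_iff₀ (by positivity) hK₀]
  have hCgap : 0 ≤ C * (S 0 - s) := mul_nonneg hC.le hgap
  nlinarith [hCgap]

theorem sublinear_rate (a S : ℕ → ℝ) (C s : ℝ) (τ : ℕ)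
    (hC : 0 < C) (hτ : 1 ≤ τ)
    (ha : ∀ k, 0 ≤ a k)
    (hS_mono : ∀ k, S (k + 1) ≤ S k)
    (hS_bdd : ∀ k, s ≤ S k)
    (hbound : ∀ k, a k ≤ C * (S k - S (k + τ))) :
    ∀ K : ℕ, τ < K →
      ∃ k ≤ K, a k ≤ C * (τ + 1) * (S 0 - s) / K :=
  sublinear_rate_general a S C s τ hC hS_mono hS_bdd hbound
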